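/- Let G be a semigroup and let 𝒮 be a Schur ring over G. For k ≥ 1 let G^k denote the set of elements of G expressible as a product of k elements of G (so G^1 = G and G^{k+1} = { a*b : a ∈ G, b ∈ G^k }). Then for every k ≥ 1, the set G^k is an 𝒮-subset: for every block X ∈ 𝒮, either X ⊆ G^k or X ∩ G^k = ∅. In particular (k = 2) the set 𝕀(G) = G \ G² of indecomposable elements of G is an 𝒮-subset. -/

import Mathlib

open scoped Pointwise

/-- The simple quantity `[X] = ∑_{x ∈ X} x` in the semigroup algebra `MonoidAlgebra ℚ G`. -/
noncomputable def simpleQty {G : Type*} [Mul G] (X : Finset G) : MonoidAlgebra ℚ G :=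
  ∑ x ∈ X, MonoidAlgebra.single x (1 : ℚ)

/-- A partition of `G` into nonempty finite blocks. -/
def IsPartition {G : Type*} (S : Set (Set G)) : Prop :=
  (∀ X ∈ S, X.Nonempty ∧ X.Finite) ∧ ∀ x : G, ∃! X, X ∈ S ∧ x ∈ X

/-- The ℚ-linear span of the simple quantities of the blocks of `S`. -/
noncomputable def schurSpan {G : Type*} [Mul G] (S : Set (Set G)) :
    Submodule ℚ (MonoidAlgebra ℚ G) :=
  Submodule.span ℚ { z | ∃ X ∈ S, ∃ hX : X.Finite, z = simpleQty hX.toFinset }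

/-- A Schur ring over the semigroup `G`. -/
def IsSchurRing {G : Type*} [Semigroup G] (S : Set (Set G)) : Prop :=
  IsPartition S ∧ ∀ X ∈ S, ∀ Y ∈ S, ∀ (hX : X.Finite) (hY : Y.Finite),
    simpleQty hX.toFinset * simpleQty hY.toFinset ∈ schurSpan S

/-- `A` is an `S`-subset: a union of blocks of `S`. -/
def IsSUnion {G : Type*} (S : Set (Set G)) (A : Set G) : Prop :=
  ∀ X ∈ S, X ⊆ A ∨ X ∩ A = ∅

/-- `iterProd k` is the set `G^(k+1)` of elements expressible as a product of `k+1`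
elements of `G`; so `iterProd 0 = G¹ = G` and `iterProd (k+1) = G · iterProd k`. -/
def iterProd {G : Type*} [Mul G] : ℕ → Set G
  | 0 => Set.univ
  | k + 1 => { z : G | ∃ a : G, ∃ b ∈ iterProd k, z = a * b }

lemma simpleQty_apply {G : Type*} [Mul G] [DecidableEq G] (A : Finset G) (x : G) :
    (simpleQty A).coeff x = if x ∈ A then (1:ℚ) else 0 := by
  rw [simpleQty, MonoidAlgebra.coeff_sum, Finsupp.finset_sum_apply]
  rw [show (∑ a ∈ A, (MonoidAlgebra.single a (1:ℚ)).coeff x) = ∑ a ∈ A, if a = x then (1:ℚ) else 0 from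
    Finset.sum_congr rfl fun a _ => MonoidAlgebra.coeff_single_apply]
  simp [Finset.sum_ite_eq, eq_comm]

lemma prod_apply' {G : Type*} [Mul G] [DecidableEq G] (A B : Finset G) (x : G) :
    (simpleQty A * simpleQty B).coeff x = ∑ a ∈ A, ∑ b ∈ B, (if a * b = x then (1:ℚ) else 0) := by
  rw [simpleQty, simpleQty, Finset.sum_mul_sum]
  rw [show ((∑ a ∈ A, ∑ b ∈ B, MonoidAlgebra.single a (1:ℚ) * MonoidAlgebra.single b 1)) =
      ∑ a ∈ A, ∑ b ∈ B, MonoidAlgebra.single (a*b) (1:ℚ) by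
    simp [MonoidAlgebra.single_mul_single]]
  rw [MonoidAlgebra.coeff_sum, Finsupp.finset_sum_apply]
  refine Finset.sum_congr rfl fun a _ => ?_
  rw [MonoidAlgebra.coeff_sum, Finsupp.finset_sum_apply]
  refine Finset.sum_congr rfl fun b _ => ?_
  rw [MonoidAlgebra.coeff_single_apply]

/-- coefficients of elements of the Schur span are constant on blocks -/
lemma span_coeff_const {G : Type*} [Mul G] {S : Set (Set G)} (hP : IsPartition S)
    {z : MonoidAlgebra ℚ G} (hz : z ∈ schurSpan S) {X : Set G} (hX : X ∈ S)
    {x x' : G} (hx : x ∈ X) (hx' : x' ∈ X) : z.coeff x = z.coeff x' := by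
  classical
  induction hz using Submodule.span_induction with
  | mem w hw =>
    obtain ⟨C, hC, hCfin, rfl⟩ := hw
    rw [simpleQty_apply, simpleQty_apply]
    have key : x ∈ C ↔ x' ∈ C := by
      obtain ⟨U, -, hU⟩ := hP.2 x
      constructor
      · intro h
        have h1 : C = X := ((hU C ⟨hC, h⟩).trans (hU X ⟨hX, hx⟩).symm)
        rw [h1]; exact hx'
      · intro h
        obtain ⟨U', -, hU'⟩ := hP.2 x'
        have h1 : C = X := ((hU' C ⟨hC, h⟩).trans (hU' X ⟨hX, hx'⟩).symm)
        rw [h1]; exact hx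
    simp only [Set.Finite.mem_toFinset]
    by_cases h : x ∈ C
    · rw [if_pos h, if_pos (key.mp h)]
    · rw [if_neg h, if_neg (fun h' => h (key.mpr h'))]
  | zero => simp
  | add w v _ _ hw hv => rw [MonoidAlgebra.coeff_add, Finsupp.add_apply, Finsupp.add_apply, hw, hv]
  | smul c w _ hw => rw [MonoidAlgebra.coeff_smul, Finsupp.smul_apply, Finsupp.smul_apply, hw]

/-- for every `k ≥ 1`, the set `G^k` of products of `k` elements is an
`S`-subset of every Schur ring `S`; in particular the set `G \ G²` of indecomposable
elements is an `S`-subset. -/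
theorem iterProd_is_SUnion {G : Type*} [Semigroup G]
    (S : Set (Set G)) (hS : IsSchurRing S) :
    (∀ k : ℕ, ∀ X ∈ S, X ⊆ iterProd k ∨ X ∩ iterProd k = ∅) ∧
    (∀ X ∈ S, X ⊆ (Set.univ \ iterProd 1) ∨ X ∩ (Set.univ \ iterProd 1) = ∅) := by
  classical
  obtain ⟨hP, hmul⟩ := hS
  have main : ∀ k : ℕ, ∀ X ∈ S, X ⊆ iterProd k ∨ X ∩ iterProd k = ∅ := by
    intro k
    induction k with
    | zero => intro X _; left; intro x _; exact Set.mem_univ x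
    | succ k ih =>
      intro X hX
      by_cases hne : (X ∩ iterProd (k + 1)).Nonempty
      · left
        obtain ⟨x, hxX, hxP⟩ := hne
        obtain ⟨a, b, hb, hxab⟩ := hxP
        obtain ⟨Y, ⟨hYS, hbY⟩, -⟩ := hP.2 b
        obtain ⟨Z, ⟨hZS, haZ⟩, -⟩ := hP.2 a
        have hYfin := (hP.1 Y hYS).2
        have hZfin := (hP.1 Z hZS).2
        have hYsub : Y ⊆ iterProd k := by
          rcases ih Y hYS with h | h
          · exact h
          · exact absurd h (by
              rw [← Set.not_nonempty_iff_eq_empty]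
              exact fun hc => hc ⟨b, hbY, hb⟩)
        have hz := hmul Z hZS Y hYS hZfin hYfin
        set z := simpleQty hZfin.toFinset * simpleQty hYfin.toFinset with hzdef
        have hxco : z.coeff x ≠ 0 := by
          rw [hzdef, prod_apply']
          refine ne_of_gt (Finset.sum_pos' (fun a' _ => Finset.sum_nonneg fun b' _ => by positivity) ?_)
          refine ⟨a, hZfin.mem_toFinset.mpr haZ, Finset.sum_pos' (fun b' _ => by positivity) ?_⟩
          exact ⟨b, hYfin.mem_toFinset.mpr hbY, by rw [if_pos hxab.symm]; norm_num⟩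
        intro x' hx'X
        have hco : z.coeff x' ≠ 0 := by
          rw [span_coeff_const hP hz hX hx'X hxX]; exact hxco
        rw [hzdef, prod_apply'] at hco
        have : ∃ a' ∈ hZfin.toFinset, ∃ b' ∈ hYfin.toFinset, a' * b' = x' := by
          by_contra hcon
          push_neg at hcon
          exact hco (Finset.sum_eq_zero fun a' ha' => Finset.sum_eq_zero fun b' hb' =>
            if_neg (hcon a' ha' b' hb'))
        obtain ⟨a', -, b', hb', hab'⟩ := this
        exact ⟨a', b', hYsub (hYfin.mem_toFinset.mp hb'), hab'.symm⟩
      · right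
        exact Set.not_nonempty_iff_eq_empty.mp hne
  refine ⟨main, fun X hX => ?_⟩
  rcases main 1 X hX with h | h
  · right
    rw [← Set.not_nonempty_iff_eq_empty]
    rintro ⟨x, hxX, -, hxn⟩
    exact hxn (h hxX)
  · left
    intro x hxX
    refine ⟨Set.mem_univ x, fun hx1 => ?_⟩
    have : x ∈ X ∩ iterProd 1 := ⟨hxX, hx1⟩
    rw [h] at this
    exact this
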